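/- Stationary kink profiles for the saturated aggregation equation: let α, C, D > 0 and l ≥ 0, and define ρ_∞ : ℝ → ℝ by ρ_∞(x) = α·exp(−(C/(2D))·max(x² − l², 0)). Then for every x ∈ ℝ with |x| ≠ l, the function Φ(y) = D·log(ρ_∞(y)) + (C/2)·y² is differentiable at x and the flux vanishes: ρ_∞(x)·(α − ρ_∞(x))·Φ'(x) = 0. (For |x| < l one has ρ_∞(x) = α so α − ρ_∞(x) = 0, while for |x| > l the function Φ is locally constant equal to D·log α + C·l²/2.) -/

import Mathlib

/-!
Since `log (α·e^t) = log α + t`, the potential is `Φ(y) = D·log α + (C/2)·min(y², l²)`: it is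
`D·log α + (C/2)·y²` on `|y| < l`, where `ρ_∞ = α` kills the factor `α − ρ_∞`, and the constant
`D·log α + (C/2)·l²` on `|y| > l`, where `Φ' = 0`.
-/

/-- The kink stationary profile `ρ_∞(x) = α·exp(−(C/(2D))·(x² − l²)⁺)`. -/
noncomputable def rhoInf (α C D l : ℝ) (x : ℝ) : ℝ :=
  α * Real.exp (-(C / (2 * D)) * max (x ^ 2 - l ^ 2) 0)

/-- The potential `Φ(y) = D·log(ρ_∞(y)) + (C/2)·y²`. -/
noncomputable def kinkPotential (α C D l : ℝ) (y : ℝ) : ℝ :=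
  D * Real.log (rhoInf α C D l y) + C / 2 * y ^ 2

theorem HasDerivAt.min_of_lt {f g : ℝ → ℝ} {f' x : ℝ} (hf : HasDerivAt f f' x)
    (hg : ContinuousAt g x) (hlt : f x < g x) :
    HasDerivAt (fun y => min (f y) (g y)) f' x :=
  hf.congr_of_eventuallyEq <| (hf.continuousAt.eventually_lt hg hlt).mono fun _ hy =>
    min_eq_left hy.le

theorem HasDerivAt.min_of_gt {f g : ℝ → ℝ} {g' x : ℝ} (hf : ContinuousAt f x)
    (hg : HasDerivAt g g' x) (hlt : g x < f x) :
    HasDerivAt (fun y => min (f y) (g y)) g' x := by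
  simpa only [min_comm] using hg.min_of_lt hf hlt

section Kink

variable {α C D l : ℝ}

theorem rhoInf_of_sq_le {x : ℝ} (h : x ^ 2 ≤ l ^ 2) : rhoInf α C D l x = α := by
  simp [rhoInf, max_eq_right (sub_nonpos.2 h)]

theorem kinkPotential_eq_min (hα : α ≠ 0) (hD : D ≠ 0) :
    kinkPotential α C D l = fun y => D * Real.log α + C / 2 * min (y ^ 2) (l ^ 2) := by
  funext y
  rw [kinkPotential, rhoInf, Real.log_mul hα (Real.exp_ne_zero _), Real.log_exp]
  rcases le_total (y ^ 2) (l ^ 2) with h | h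
  · rw [max_eq_right (sub_nonpos.2 h), min_eq_left h]
    ring
  · rw [max_eq_left (sub_nonneg.2 h), min_eq_right h]
    field_simp
    ring

theorem hasDerivAt_kinkPotential_of_sq_lt (hα : α ≠ 0) (hD : D ≠ 0) {x : ℝ}
    (h : x ^ 2 < l ^ 2) : HasDerivAt (kinkPotential α C D l) (C / 2 * (2 * x)) x := by
  rw [kinkPotential_eq_min hα hD]
  have hmin := (hasDerivAt_pow 2 x).min_of_lt continuousAt_const h
  simpa using (hmin.const_mul (C / 2)).const_add (D * Real.log α)

theorem hasDerivAt_kinkPotential_of_sq_gt (hα : α ≠ 0) (hD : D ≠ 0) {x : ℝ}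
    (h : l ^ 2 < x ^ 2) : HasDerivAt (kinkPotential α C D l) 0 x := by
  rw [kinkPotential_eq_min hα hD]
  have hmin := HasDerivAt.min_of_gt (continuous_pow 2).continuousAt
    (hasDerivAt_const x (l ^ 2)) h
  simpa using (hmin.const_mul (C / 2)).const_add (D * Real.log α)

end Kink

theorem kink_profile_stationary_general (α C D l : ℝ)
    (hα : 0 < α) (hD : 0 < D) (hl : 0 ≤ l) :
    ∀ x : ℝ, |x| ≠ l →
      DifferentiableAt ℝ (kinkPotential α C D l) x ∧
        rhoInf α C D l x * (α - rhoInf α C D l x) * deriv (kinkPotential α C D l) x = 0 := by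
  intro x hx
  have hsq : x ^ 2 ≠ l ^ 2 := fun h =>
    hx ((sq_eq_sq₀ (abs_nonneg x) hl).1 (by rwa [sq_abs]))
  rcases hsq.lt_or_gt with h | h
  · exact ⟨(hasDerivAt_kinkPotential_of_sq_lt hα.ne' hD.ne' h).differentiableAt, by
      rw [rhoInf_of_sq_le h.le, sub_self, mul_zero, zero_mul]⟩
  · have hΦ := hasDerivAt_kinkPotential_of_sq_gt (C := C) hα.ne' hD.ne' h
    exact ⟨hΦ.differentiableAt, by rw [hΦ.deriv, mul_zero]⟩

/-- The kink profile is a stationary state of the saturated aggregation equation: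
away from `|x| = l` the potential `Φ` is differentiable and the flux
`ρ_∞·(α − ρ_∞)·Φ'` vanishes. -/
theorem kink_profile_stationary (α C D l : ℝ)
    (hα : 0 < α) (hC : 0 < C) (hD : 0 < D) (hl : 0 ≤ l) :
    ∀ x : ℝ, |x| ≠ l →
      DifferentiableAt ℝ (kinkPotential α C D l) x ∧
        rhoInf α C D l x * (α - rhoInf α C D l x) * deriv (kinkPotential α C D l) x = 0 :=
  kink_profile_stationary_general α C D l hα hD hl
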